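/- Let G be a 2-thin graph with class partition V^1, V^2 consistent with an ordering <. Then the explicitly defined model M_1(G) (where the upper-right corner of the i-th vertex of V^1 is (i+n_2, i), the upper-right corner of the i-th vertex of V^2 is (i, i+n_1), and lower-left corners are determined by the smallest same-class neighbor and largest other-class non-neighbor indices) is a blocking 2-diagonal box intersection model of G respecting the relative order on each class; moreover, if the order and partition are strongly consistent, the model is bi-semi-proper. -/

import Mathlib

/-- An ordering (given by an injective labeling `f`) is consistent with a partition
(given by a class function `c`). -/
def ConsistentWith {V : Type*} {K : Type*} (G : SimpleGraph V) (f : V → ℕ) (c : V → K) : Prop :=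
  ∀ u v w : V, f u < f v → f v < f w → c u = c v → G.Adj w u → G.Adj w v

/-- The reverse of the ordering given by `f` is consistent with `c`. -/
def RevConsistentWith {V : Type*} {K : Type*} (G : SimpleGraph V) (f : V → ℕ) (c : V → K) : Prop :=
  ∀ u v w : V, f u < f v → f v < f w → c v = c w → G.Adj u w → G.Adj u v

/-- An axis-parallel box `[x1, x2] × [y1, y2]`, given by its coordinates. -/
structure Box where
  x1 : ℝ
  x2 : ℝ
  y1 : ℝ
  y2 : ℝ

/-- The set of points of a box. -/
def Box.toSet (b : Box) : Set (ℝ × ℝ) := Set.Icc b.x1 b.x2 ×ˢ Set.Icc b.y1 b.y2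

/-- The vertical prolongation `[x1, x2] × ℝ` of a box. -/
def Box.vert (b : Box) : Set (ℝ × ℝ) := Set.Icc b.x1 b.x2 ×ˢ (Set.univ : Set ℝ)

/-- The horizontal prolongation `ℝ × [y1, y2]` of a box. -/
def Box.horiz (b : Box) : Set (ℝ × ℝ) := (Set.univ : Set ℝ) ×ˢ Set.Icc b.y1 b.y2

/-- 2-diagonal family of boxes. -/
def TwoDiagonal {V : Type*} (box : V → Box) (d1 d2 : ℝ) : Prop :=
  d1 < 0 ∧ 0 < d2 ∧
  (∀ u v : V, u ≠ v → ((box u).x2, (box u).y2) ≠ ((box v).x2, (box v).y2)) ∧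
  ∀ v : V,
    ((box v).y2 = (box v).x2 + d1 ∧ 0 ≤ (box v).x2 ∧ (box v).y2 ≤ 0) ∨
    ((box v).y2 = (box v).x2 + d2 ∧ (box v).x2 ≤ 0 ∧ 0 ≤ (box v).y2)

/-- Blocking property of a 2-diagonal model. -/
def Blocking {V : Type*} (box : V → Box) (d1 d2 : ℝ) : Prop :=
  ∀ u v : V, (box u).y2 = (box u).x2 + d2 → (box v).y2 = (box v).x2 + d1 →
    ¬ ((box u).toSet ∩ (box v).toSet).Nonempty →
    ((box u).vert ∩ (box v).toSet).Nonempty ∨ ((box v).horiz ∩ (box u).toSet).Nonempty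

/-- `box` is a box intersection model of `G`. -/
def IsBoxModel {V : Type*} (G : SimpleGraph V) (box : V → Box) : Prop :=
  (∀ v : V, (box v).x1 ≤ (box v).x2 ∧ (box v).y1 ≤ (box v).y2) ∧
  ∀ u v : V, u ≠ v → (G.Adj u v ↔ ((box u).toSet ∩ (box v).toSet).Nonempty)

/-- Bi-semi-proper: for boxes with upper-right corners on the same diagonal and
`x2(b) < x2(b')`, one has `x1(b) ≤ x1(b')` and `y1(b) ≤ y1(b')`. -/
def BiSemiProper {V : Type*} (box : V → Box) : Prop :=
  ∀ u v : V, (box u).y2 - (box u).x2 = (box v).y2 - (box v).x2 →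
    (box u).x2 < (box v).x2 → (box u).x1 ≤ (box v).x1 ∧ (box u).y1 ≤ (box v).y1

/-- The number of vertices in class `i`. -/
noncomputable def nclass {V : Type*} (c : V → Fin 2) (i : Fin 2) : ℕ :=
  {v : V | c v = i}.ncard

/-- The (1-based) rank of `v` within its own class, with respect to the ordering `f`. -/
noncomputable def rnk {V : Type*} (c : V → Fin 2) (f : V → ℕ) (v : V) : ℕ :=
  {u : V | c u = c v ∧ f u ≤ f v}.ncard

/-- `U` within the own class of `v`: the rank of the smallest neighbor of `v` smaller
than `v` in its own class, or the rank of `v` itself if there is none. -/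
noncomputable def Uown {V : Type*} (G : SimpleGraph V) (c : V → Fin 2) (f : V → ℕ)
    (v : V) : ℕ := by
  classical
  exact if (∃ u, c u = c v ∧ f u < f v ∧ G.Adj u v) then
    sInf {j | ∃ u, c u = c v ∧ f u < f v ∧ G.Adj u v ∧ j = rnk c f u}
  else rnk c f v

/-- `U` in the other class: the largest rank of a non-neighbor of `v` smaller than `v`
in the other class, or `0` if there is none. -/
noncomputable def Uoth {V : Type*} (G : SimpleGraph V) (c : V → Fin 2) (f : V → ℕ)
    (v : V) : ℕ :=
  sSup {j | ∃ u, c u ≠ c v ∧ f u < f v ∧ ¬ G.Adj u v ∧ j = rnk c f u}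

/-- The model `M₁(G)` (translated so that the upper-right corners lie on the diagonals
`y = x - n₁` in the 4th quadrant for class `0` and `y = x + n₂` in the 2nd quadrant for
class `1`): the `i`-th vertex of class `0` has upper-right corner `(i, i - n₁)` and
lower-left corner `(U(2,v) + 1/2 - n₂, U(1,v) - 1/2 - n₁)`; the `i`-th vertex of class
`1` has upper-right corner `(i - n₂, i)` and lower-left corner
`(U(2,v) - 1/2 - n₂, U(1,v) + 1/2 - n₁)`. -/
noncomputable def M1 {V : Type*} (G : SimpleGraph V) (c : V → Fin 2) (f : V → ℕ)
    (v : V) : Box := by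
  classical
  exact if c v = 0 then
    { x1 := (Uoth G c f v : ℝ) + 1/2 - (nclass c 1 : ℝ)
      x2 := (rnk c f v : ℝ)
      y1 := (Uown G c f v : ℝ) - 1/2 - (nclass c 0 : ℝ)
      y2 := (rnk c f v : ℝ) - (nclass c 0 : ℝ) }
  else
    { x1 := (Uown G c f v : ℝ) - 1/2 - (nclass c 1 : ℝ)
      x2 := (rnk c f v : ℝ) - (nclass c 1 : ℝ)
      y1 := (Uoth G c f v : ℝ) + 1/2 - (nclass c 0 : ℝ)
      y2 := (rnk c f v : ℝ) }

/-!
Within a class the rank fixes the upper-right corner of a box, so two boxes of the same class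
meet iff `Uown v ≤ rnk u` and `Uown u ≤ rnk v`, and two boxes of different classes meet iff
`Uoth v < rnk u` and `Uoth u < rnk v`; the offsets `± 1/2` turn the comparison of corners into
exactly these comparisons of integers. Consistency of the order says that the neighbours of `v`
among the smaller vertices of a class form a final segment of them, which makes each of these
conditions equivalent to adjacency. For blocking it suffices that one of the two strict
inequalities holds, and if both failed, the non-neighbours `a` of `v` and `b` of `u` realising
`Uoth` would satisfy `u ≤ a < v ≤ b < u`. Reverse consistency makes `Uown` and `Uoth` monotone
along each class, which gives bi-semi-proper.
-/

namespace Box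

theorem toSet_inter_toSet_nonempty_iff (b b' : Box) :
    (b.toSet ∩ b'.toSet).Nonempty ↔
      max b.x1 b'.x1 ≤ min b.x2 b'.x2 ∧ max b.y1 b'.y1 ≤ min b.y2 b'.y2 := by
  simp only [toSet, Set.prod_inter_prod, Set.Icc_inter_Icc, Set.prod_nonempty_iff,
    Set.nonempty_Icc]

theorem vert_inter_toSet_nonempty_iff (b b' : Box) :
    (b.vert ∩ b'.toSet).Nonempty ↔ max b.x1 b'.x1 ≤ min b.x2 b'.x2 ∧ b'.y1 ≤ b'.y2 := by
  simp only [vert, toSet, Set.prod_inter_prod, Set.Icc_inter_Icc, Set.univ_inter,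
    Set.prod_nonempty_iff, Set.nonempty_Icc]

theorem horiz_inter_toSet_nonempty_iff (b b' : Box) :
    (b.horiz ∩ b'.toSet).Nonempty ↔ b'.x1 ≤ b'.x2 ∧ max b.y1 b'.y1 ≤ min b.y2 b'.y2 := by
  simp only [horiz, toSet, Set.prod_inter_prod, Set.Icc_inter_Icc, Set.univ_inter,
    Set.prod_nonempty_iff, Set.nonempty_Icc]

end Box

theorem Nat.cast_add_half_le_cast_iff {a b : ℕ} : (a : ℝ) + 1 / 2 ≤ b ↔ a < b := by
  constructor
  · intro h
    exact_mod_cast (by linarith : (a : ℝ) < b)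
  · intro h
    linarith [(by exact_mod_cast h : (a : ℝ) + 1 ≤ b)]

theorem Nat.cast_sub_half_le_cast_iff {a b : ℕ} : (a : ℝ) - 1 / 2 ≤ b ↔ a ≤ b := by
  rw [← Nat.lt_succ_iff, ← Nat.cast_add_half_le_cast_iff, Nat.cast_succ]
  constructor <;> intro h <;> linarith

section Model

variable {V : Type*} {G : SimpleGraph V} {c : V → Fin 2} {f : V → ℕ} {u v w : V}

theorem M1_of_class_zero (hv : c v = 0) :
    M1 G c f v =
      { x1 := (Uoth G c f v : ℝ) + 1/2 - (nclass c 1 : ℝ)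
        x2 := (rnk c f v : ℝ)
        y1 := (Uown G c f v : ℝ) - 1/2 - (nclass c 0 : ℝ)
        y2 := (rnk c f v : ℝ) - (nclass c 0 : ℝ) } := by
  simp only [M1, if_pos hv]

theorem M1_of_class_one (hv : c v = 1) :
    M1 G c f v =
      { x1 := (Uown G c f v : ℝ) - 1/2 - (nclass c 1 : ℝ)
        x2 := (rnk c f v : ℝ) - (nclass c 1 : ℝ)
        y1 := (Uoth G c f v : ℝ) + 1/2 - (nclass c 0 : ℝ)
        y2 := (rnk c f v : ℝ) } := by
  rw [M1, if_neg (by rw [hv]; decide)]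

theorem Uown_le_rnk_of_adj (hw : c w = c v) (hlt : f w < f v) (hadj : G.Adj w v) :
    Uown G c f v ≤ rnk c f w := by
  rw [Uown, if_pos ⟨w, hw, hlt, hadj⟩]
  exact Nat.sInf_le ⟨w, hw, hlt, hadj, rfl⟩

theorem Uown_eq_rnk_or_exists (G : SimpleGraph V) (c : V → Fin 2) (f : V → ℕ) (v : V) :
    Uown G c f v = rnk c f v ∨
      ∃ w, c w = c v ∧ f w < f v ∧ G.Adj w v ∧ Uown G c f v = rnk c f w := by
  unfold Uown
  split_ifs with h
  · right
    obtain ⟨w, hw, hlt, hadj⟩ := h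
    exact Nat.sInf_mem (s := {j | ∃ u, c u = c v ∧ f u < f v ∧ G.Adj u v ∧ j = rnk c f u})
      ⟨rnk c f w, w, hw, hlt, hadj, rfl⟩
  · exact .inl rfl

theorem M1_x2_sub_x2 (h : c u = c v) :
    (M1 G c f u).x2 - (M1 G c f v).x2 = rnk c f u - rnk c f v := by
  obtain hu | hu : c u = 0 ∨ c u = 1 := by omega
  · simp only [M1_of_class_zero hu, M1_of_class_zero (h ▸ hu)]
  · simp only [M1_of_class_one hu, M1_of_class_one (h ▸ hu)]
    ring

variable [Finite V]

theorem rnk_pos (v : V) : 0 < rnk c f v :=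
  (Set.ncard_pos (Set.toFinite _)).mpr ⟨v, rfl, le_rfl⟩

theorem rnk_le_nclass (v : V) : rnk c f v ≤ nclass c (c v) :=
  Set.ncard_le_ncard (fun _ hu => hu.1) (Set.toFinite _)

theorem nclass_pos (v : V) : 0 < nclass c (c v) :=
  (Set.ncard_pos (Set.toFinite _)).mpr ⟨v, rfl⟩

theorem rnk_le_rnk (h : c u = c v) (hle : f u ≤ f v) : rnk c f u ≤ rnk c f v :=
  Set.ncard_le_ncard (fun _ hw => ⟨hw.1.trans h, hw.2.trans hle⟩) (Set.toFinite _)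

theorem rnk_lt_rnk (h : c u = c v) (hlt : f u < f v) : rnk c f u < rnk c f v := by
  refine Set.ncard_lt_ncard ⟨fun _ hw => ⟨hw.1.trans h, hw.2.trans hlt.le⟩, fun hsub => ?_⟩
    (Set.toFinite _)
  exact hlt.not_ge (hsub ⟨rfl, le_rfl⟩).2

theorem rnk_lt_rnk_iff (h : c u = c v) : rnk c f u < rnk c f v ↔ f u < f v :=
  ⟨fun hr => not_le.mp fun hle => hr.not_ge (rnk_le_rnk h.symm hle), rnk_lt_rnk h⟩

theorem rnk_le_rnk_iff (h : c u = c v) : rnk c f u ≤ rnk c f v ↔ f u ≤ f v := by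
  simpa only [not_lt] using (rnk_lt_rnk_iff (f := f) h.symm).not

theorem eq_of_rnk_eq (hf : Function.Injective f) (h : c u = c v)
    (hr : rnk c f u = rnk c f v) : u = v :=
  hf ((rnk_le_rnk_iff h).mp hr.le |>.antisymm ((rnk_le_rnk_iff h.symm).mp hr.ge))

theorem Uown_le_rnk (G : SimpleGraph V) (c : V → Fin 2) (f : V → ℕ) (v : V) :
    Uown G c f v ≤ rnk c f v := by
  obtain h | ⟨w, hw, hlt, -, h⟩ := Uown_eq_rnk_or_exists G c f v
  · exact h.le
  · exact h ▸ (rnk_lt_rnk hw hlt).le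

theorem adj_of_Uown_le_rnk (hf : Function.Injective f) (hcons : ConsistentWith G f c)
    (h : c u = c v) (hlt : f u < f v) (hle : Uown G c f v ≤ rnk c f u) : G.Adj u v := by
  obtain hU | ⟨w, hw, hwv, hadj, hU⟩ := Uown_eq_rnk_or_exists G c f v
  · exact absurd (hU ▸ hle) (rnk_lt_rnk h hlt).not_ge
  · have hwu : c w = c u := hw.trans h.symm
    obtain hwu' | hwu' := ((rnk_le_rnk_iff hwu).mp (hU ▸ hle)).lt_or_eq
    · exact (hcons w u v hwu' hlt hwu hadj.symm).symm
    · exact hf hwu' ▸ hadj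

theorem adj_iff_Uown_le_rnk (hf : Function.Injective f) (hcons : ConsistentWith G f c)
    (hne : u ≠ v) (h : c u = c v) :
    G.Adj u v ↔ Uown G c f v ≤ rnk c f u ∧ Uown G c f u ≤ rnk c f v := by
  wlog hlt : f u < f v generalizing u v
  · rw [G.adj_comm, and_comm]
    exact this hne.symm h.symm ((hf.ne hne).symm.lt_of_le (not_lt.mp hlt))
  have hUu : Uown G c f u ≤ rnk c f v := (Uown_le_rnk G c f u).trans (rnk_lt_rnk h hlt).le
  exact ⟨fun hadj => ⟨Uown_le_rnk_of_adj h hlt hadj, hUu⟩,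
    fun hle => adj_of_Uown_le_rnk hf hcons h hlt hle.1⟩

theorem Uown_mono (hrev : RevConsistentWith G f c) (h : c u = c v) (hlt : f u < f v) :
    Uown G c f u ≤ Uown G c f v := by
  have hUu := Uown_le_rnk G c f u
  obtain hU | ⟨w, hw, hwv, hadj, hU⟩ := Uown_eq_rnk_or_exists G c f v
  · exact hU ▸ hUu.trans (rnk_lt_rnk h hlt).le
  · rw [hU]
    obtain hwu | hwu := lt_or_ge (f w) (f u)
    · exact Uown_le_rnk_of_adj (hw.trans h.symm) hwu (hrev w u v hwu hlt h hadj)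
    · exact hUu.trans (rnk_le_rnk (h.trans hw.symm) hwu)

theorem bddAbove_Uoth_set (G : SimpleGraph V) (c : V → Fin 2) (f : V → ℕ) (v : V) :
    BddAbove {j | ∃ u, c u ≠ c v ∧ f u < f v ∧ ¬ G.Adj u v ∧ j = rnk c f u} :=
  (Set.finite_range (rnk c f)).bddAbove.mono (by rintro _ ⟨u, -, -, -, rfl⟩; exact ⟨u, rfl⟩)

theorem rnk_le_Uoth (hne : c u ≠ c v) (hlt : f u < f v) (hnadj : ¬ G.Adj u v) :
    rnk c f u ≤ Uoth G c f v :=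
  le_csSup (bddAbove_Uoth_set G c f v) ⟨u, hne, hlt, hnadj, rfl⟩

theorem Uoth_eq_zero_or_exists (G : SimpleGraph V) (c : V → Fin 2) (f : V → ℕ) (v : V) :
    Uoth G c f v = 0 ∨
      ∃ w, c w ≠ c v ∧ f w < f v ∧ ¬ G.Adj w v ∧ Uoth G c f v = rnk c f w := by
  obtain hS | hS := Set.eq_empty_or_nonempty
    {j | ∃ u, c u ≠ c v ∧ f u < f v ∧ ¬ G.Adj u v ∧ j = rnk c f u}
  · exact .inl (by rw [Uoth, hS, csSup_empty]; rfl)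
  · exact .inr (Nat.sSup_mem hS (bddAbove_Uoth_set G c f v))

theorem Uoth_le_nclass {j : Fin 2} (hj : j ≠ c v) : Uoth G c f v ≤ nclass c j := by
  obtain h | ⟨w, hw, -, -, h⟩ := Uoth_eq_zero_or_exists G c f v
  · exact h ▸ Nat.zero_le _
  · exact h ▸ (show c w = j by omega) ▸ rnk_le_nclass w

theorem Uoth_lt_rnk_of_adj (hf : Function.Injective f) (hcons : ConsistentWith G f c)
    (hne : c u ≠ c v) (hadj : G.Adj u v) : Uoth G c f v < rnk c f u := by
  obtain h | ⟨w, hw, hwv, hnadj, h⟩ := Uoth_eq_zero_or_exists G c f v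
  · exact h ▸ rnk_pos u
  · rw [h, rnk_lt_rnk_iff (show c w = c u by omega)]
    by_contra! huw
    obtain huw | huw := huw.lt_or_eq
    · exact hnadj (hcons u w v huw hwv (by omega) hadj.symm).symm
    · exact hnadj (hf huw ▸ hadj)

theorem adj_iff_Uoth_lt_rnk (hf : Function.Injective f) (hcons : ConsistentWith G f c)
    (hne : c u ≠ c v) :
    G.Adj u v ↔ Uoth G c f v < rnk c f u ∧ Uoth G c f u < rnk c f v := by
  wlog hlt : f u < f v generalizing u v
  · rw [G.adj_comm, and_comm]
    exact this hne.symm ((hf.ne (ne_of_apply_ne c hne)).symm.lt_of_le (not_lt.mp hlt))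
  refine ⟨fun hadj => ⟨Uoth_lt_rnk_of_adj hf hcons hne hadj,
    Uoth_lt_rnk_of_adj hf hcons hne.symm hadj.symm⟩, fun h => ?_⟩
  by_contra hnadj
  exact (rnk_le_Uoth hne hlt hnadj).not_gt h.1

theorem Uoth_lt_rnk_or_Uoth_lt_rnk (hne : c u ≠ c v) :
    Uoth G c f v < rnk c f u ∨ Uoth G c f u < rnk c f v := by
  by_contra! ⟨hv, hu⟩
  obtain hv0 | ⟨a, ha, hav, -, hva⟩ := Uoth_eq_zero_or_exists G c f v
  · exact (rnk_pos u).not_ge (hv0 ▸ hv)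
  obtain hu0 | ⟨b, hb, hbu, -, hub⟩ := Uoth_eq_zero_or_exists G c f u
  · exact (rnk_pos v).not_ge (hu0 ▸ hu)
  have hua := (rnk_le_rnk_iff (show c u = c a by omega)).mp (hva ▸ hv)
  have hvb := (rnk_le_rnk_iff (show c v = c b by omega)).mp (hub ▸ hu)
  omega

theorem Uoth_mono (hrev : RevConsistentWith G f c) (h : c u = c v) (hlt : f u < f v) :
    Uoth G c f u ≤ Uoth G c f v := by
  obtain h0 | ⟨w, hw, hwu, hnadj, hU⟩ := Uoth_eq_zero_or_exists G c f u
  · exact h0 ▸ Nat.zero_le _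
  · exact hU ▸ rnk_le_Uoth (h ▸ hw) (hwu.trans hlt)
      fun hadj => hnadj (hrev w u v hwu hlt h hadj)

theorem cast_rnk_Uown_Uoth_bounds (G : SimpleGraph V) (f : V → ℕ) {i j : Fin 2}
    (hv : c v = i) (hj : j ≠ i) :
    1 ≤ (rnk c f v : ℝ) ∧ (rnk c f v : ℝ) ≤ nclass c i ∧ (Uown G c f v : ℝ) ≤ rnk c f v ∧
      (Uoth G c f v : ℝ) ≤ nclass c j := by
  refine ⟨?_, ?_, ?_, ?_⟩ <;> norm_cast
  · exact rnk_pos v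
  · exact hv ▸ rnk_le_nclass v
  · exact Uown_le_rnk G c f v
  · exact Uoth_le_nclass (hv ▸ hj)

theorem M1_x1_le_x2_and_y1_le_y2 (G : SimpleGraph V) (c : V → Fin 2) (f : V → ℕ) (v : V) :
    (M1 G c f v).x1 ≤ (M1 G c f v).x2 ∧ (M1 G c f v).y1 ≤ (M1 G c f v).y2 := by
  obtain hv | hv : c v = 0 ∨ c v = 1 := by omega
  · obtain ⟨h1, -, h3, h4⟩ := cast_rnk_Uown_Uoth_bounds G f hv one_ne_zero
    simp only [M1_of_class_zero hv]
    constructor <;> linarith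
  · obtain ⟨h1, h2, h3, h4⟩ := cast_rnk_Uown_Uoth_bounds G f hv zero_ne_one
    simp only [M1_of_class_one hv]
    constructor <;> linarith

theorem M1_y2_sub_x2_neg_or_pos (G : SimpleGraph V) (c : V → Fin 2) (f : V → ℕ) (v : V) :
    ((M1 G c f v).y2 - (M1 G c f v).x2 < 0 ∧ c v = 0) ∨
      (0 < (M1 G c f v).y2 - (M1 G c f v).x2 ∧ c v = 1) := by
  have hn : (0 : ℝ) < nclass c (c v) := by exact_mod_cast nclass_pos v
  obtain hv | hv : c v = 0 ∨ c v = 1 := by omega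
  · rw [hv] at hn
    simp only [M1_of_class_zero hv]
    exact .inl ⟨by linarith, hv⟩
  · rw [hv] at hn
    simp only [M1_of_class_one hv]
    exact .inr ⟨by linarith, hv⟩

theorem class_eq_of_M1_y2_sub_x2_eq
    (h : (M1 G c f u).y2 - (M1 G c f u).x2 = (M1 G c f v).y2 - (M1 G c f v).x2) :
    c u = c v := by
  obtain ⟨hu, hcu⟩ | ⟨hu, hcu⟩ := M1_y2_sub_x2_neg_or_pos G c f u <;>
    obtain ⟨hv, hcv⟩ | ⟨hv, hcv⟩ := M1_y2_sub_x2_neg_or_pos G c f v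
  all_goals first | exact hcu.trans hcv.symm | linarith

theorem M1_x2_lt_x2_iff (h : c u = c v) : (M1 G c f u).x2 < (M1 G c f v).x2 ↔ f u < f v := by
  rw [← sub_neg, M1_x2_sub_x2 h, sub_neg, Nat.cast_lt, rnk_lt_rnk_iff h]

theorem M1_inter_nonempty_iff_of_class_eq (h : c u = c v) :
    ((M1 G c f u).toSet ∩ (M1 G c f v).toSet).Nonempty ↔
      Uown G c f v ≤ rnk c f u ∧ Uown G c f u ≤ rnk c f v := by
  rw [Box.toSet_inter_toSet_nonempty_iff, ← Nat.cast_sub_half_le_cast_iff,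
    ← Nat.cast_sub_half_le_cast_iff]
  obtain hu | hu : c u = 0 ∨ c u = 1 := by omega
  · obtain ⟨hu1, hu2, hu3, hu4⟩ := cast_rnk_Uown_Uoth_bounds G f hu one_ne_zero
    obtain ⟨hv1, hv2, hv3, hv4⟩ := cast_rnk_Uown_Uoth_bounds G f (h ▸ hu) one_ne_zero
    simp only [M1_of_class_zero hu, M1_of_class_zero (h ▸ hu), max_le_iff, le_min_iff]
    constructor
    · rintro ⟨⟨⟨_, _⟩, _, _⟩, ⟨_, _⟩, _, _⟩
      constructor <;> linarith
    · rintro ⟨_, _⟩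
      refine ⟨⟨⟨?_, ?_⟩, ?_, ?_⟩, ⟨?_, ?_⟩, ?_, ?_⟩ <;> linarith
  · obtain ⟨hu1, hu2, hu3, hu4⟩ := cast_rnk_Uown_Uoth_bounds G f hu zero_ne_one
    obtain ⟨hv1, hv2, hv3, hv4⟩ := cast_rnk_Uown_Uoth_bounds G f (h ▸ hu) zero_ne_one
    simp only [M1_of_class_one hu, M1_of_class_one (h ▸ hu), max_le_iff, le_min_iff]
    constructor
    · rintro ⟨⟨⟨_, _⟩, _, _⟩, ⟨_, _⟩, _, _⟩
      constructor <;> linarith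
    · rintro ⟨_, _⟩
      refine ⟨⟨⟨?_, ?_⟩, ?_, ?_⟩, ⟨?_, ?_⟩, ?_, ?_⟩ <;> linarith

theorem M1_inter_nonempty_iff_of_class_ne (h : c u ≠ c v) :
    ((M1 G c f u).toSet ∩ (M1 G c f v).toSet).Nonempty ↔
      Uoth G c f v < rnk c f u ∧ Uoth G c f u < rnk c f v := by
  wlog hu : c u = 0 generalizing u v
  · rw [Set.inter_comm, and_comm]
    exact this h.symm (by omega)
  have hv : c v = 1 := by omega
  obtain ⟨hu1, hu2, hu3, hu4⟩ := cast_rnk_Uown_Uoth_bounds G f hu one_ne_zero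
  obtain ⟨hv1, hv2, hv3, hv4⟩ := cast_rnk_Uown_Uoth_bounds G f hv zero_ne_one
  rw [Box.toSet_inter_toSet_nonempty_iff, ← Nat.cast_add_half_le_cast_iff,
    ← Nat.cast_add_half_le_cast_iff]
  simp only [M1_of_class_zero hu, M1_of_class_one hv, max_le_iff, le_min_iff]
  constructor
  · rintro ⟨⟨⟨_, _⟩, _, _⟩, ⟨_, _⟩, _, _⟩
    constructor <;> linarith
  · rintro ⟨_, _⟩
    refine ⟨⟨⟨?_, ?_⟩, ?_, ?_⟩, ⟨?_, ?_⟩, ?_, ?_⟩ <;> linarith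

theorem M1_isBoxModel (hf : Function.Injective f) (hcons : ConsistentWith G f c) :
    IsBoxModel G (M1 G c f) := by
  refine ⟨M1_x1_le_x2_and_y1_le_y2 G c f, fun u v hne => ?_⟩
  by_cases h : c u = c v
  · rw [adj_iff_Uown_le_rnk hf hcons hne h, M1_inter_nonempty_iff_of_class_eq h]
  · rw [adj_iff_Uoth_lt_rnk hf hcons h, M1_inter_nonempty_iff_of_class_ne h]

theorem M1_blocking (G : SimpleGraph V) (c : V → Fin 2) (f : V → ℕ) :
    Blocking (M1 G c f) (-(nclass c 0 : ℝ)) (nclass c 1 : ℝ) := by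
  intro u v hu hv _
  have hcu : c u = 1 := by
    have : (0 : ℝ) ≤ nclass c 1 := Nat.cast_nonneg _
    obtain ⟨h, -⟩ | ⟨-, h⟩ := M1_y2_sub_x2_neg_or_pos G c f u
    · linarith
    · exact h
  have hcv : c v = 0 := by
    have : (0 : ℝ) ≤ nclass c 0 := Nat.cast_nonneg _
    obtain ⟨-, h⟩ | ⟨h, -⟩ := M1_y2_sub_x2_neg_or_pos G c f v
    · exact h
    · linarith
  obtain ⟨hu1, hu2, hu3, hu4⟩ := cast_rnk_Uown_Uoth_bounds G f hcu zero_ne_one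
  obtain ⟨hv1, hv2, hv3, hv4⟩ := cast_rnk_Uown_Uoth_bounds G f hcv one_ne_zero
  rw [Box.vert_inter_toSet_nonempty_iff, Box.horiz_inter_toSet_nonempty_iff]
  simp only [M1_of_class_one hcu, M1_of_class_zero hcv, max_le_iff, le_min_iff]
  obtain h | h := Uoth_lt_rnk_or_Uoth_lt_rnk (G := G) (f := f) (show c u ≠ c v by omega)
  · left
    have := Nat.cast_add_half_le_cast_iff.mpr h
    refine ⟨⟨⟨?_, ?_⟩, ?_, ?_⟩, ?_⟩ <;> linarith
  · right
    have := Nat.cast_add_half_le_cast_iff.mpr h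
    refine ⟨?_, ⟨?_, ?_⟩, ?_, ?_⟩ <;> linarith

theorem M1_twoDiagonal (hf : Function.Injective f) (h0 : ∃ v, c v = 0) (h1 : ∃ v, c v = 1) :
    TwoDiagonal (M1 G c f) (-(nclass c 0 : ℝ)) (nclass c 1 : ℝ) := by
  obtain ⟨v0, hv0⟩ := h0
  obtain ⟨v1, hv1⟩ := h1
  have hn0 : (0 : ℝ) < nclass c 0 := by exact_mod_cast hv0 ▸ nclass_pos (c := c) v0
  have hn1 : (0 : ℝ) < nclass c 1 := by exact_mod_cast hv1 ▸ nclass_pos (c := c) v1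
  refine ⟨neg_neg_of_pos hn0, hn1, fun u v hne hcorner => hne ?_, fun v => ?_⟩
  · obtain ⟨hx, hy⟩ := Prod.mk.inj hcorner
    have h : c u = c v := class_eq_of_M1_y2_sub_x2_eq (G := G) (f := f) (by rw [hx, hy])
    have hr := M1_x2_sub_x2 (G := G) (f := f) h
    rw [hx, sub_self, eq_comm, sub_eq_zero, Nat.cast_inj] at hr
    exact eq_of_rnk_eq hf h hr
  · obtain hv | hv : c v = 0 ∨ c v = 1 := by omega
    · obtain ⟨h1, h2, -, -⟩ := cast_rnk_Uown_Uoth_bounds G f hv one_ne_zero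
      simp only [M1_of_class_zero hv]
      exact .inl ⟨by ring, by linarith, by linarith⟩
    · obtain ⟨h1, h2, -, -⟩ := cast_rnk_Uown_Uoth_bounds G f hv zero_ne_one
      simp only [M1_of_class_one hv]
      exact .inr ⟨by ring, by linarith, by linarith⟩

theorem M1_biSemiProper (hrev : RevConsistentWith G f c) : BiSemiProper (M1 G c f) := by
  intro u v hdiag hx
  have h := class_eq_of_M1_y2_sub_x2_eq hdiag
  have hlt := (M1_x2_lt_x2_iff h).mp hx
  have hUoth : (Uoth G c f u : ℝ) ≤ Uoth G c f v := Nat.cast_le.mpr (Uoth_mono hrev h hlt)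
  have hUown : (Uown G c f u : ℝ) ≤ Uown G c f v := Nat.cast_le.mpr (Uown_mono hrev h hlt)
  obtain hu | hu : c u = 0 ∨ c u = 1 := by omega
  · simp only [M1_of_class_zero hu, M1_of_class_zero (h ▸ hu)]
    constructor <;> linarith
  · simp only [M1_of_class_one hu, M1_of_class_one (h ▸ hu)]
    constructor <;> linarith

end Model

/-- Let `G` be a 2-thin graph with class partition given by `c` consistent with the
ordering given by `f` (both classes nonempty). Then the explicit model `M₁(G)` is a
blocking 2-diagonal box intersection model of `G` respecting the relative order on each
class; moreover, if the order and the partition are strongly consistent, the model is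
bi-semi-proper. -/
theorem M1_blocking_twoDiagonal_model {V : Type*} [Fintype V] (G : SimpleGraph V)
    (f : V → ℕ) (hf : Function.Injective f) (c : V → Fin 2)
    (hcons : ConsistentWith G f c)
    (h0 : ∃ v, c v = 0) (h1 : ∃ v, c v = 1) :
    TwoDiagonal (M1 G c f) (-(nclass c 0 : ℝ)) (nclass c 1 : ℝ) ∧
    Blocking (M1 G c f) (-(nclass c 0 : ℝ)) (nclass c 1 : ℝ) ∧
    IsBoxModel G (M1 G c f) ∧
    (∀ u v : V, c u = c v → f u < f v → (M1 G c f u).x2 < (M1 G c f v).x2) ∧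
    (RevConsistentWith G f c → BiSemiProper (M1 G c f)) :=
  ⟨M1_twoDiagonal hf h0 h1, M1_blocking G c f, M1_isBoxModel hf hcons,
    fun _ _ h => (M1_x2_lt_x2_iff h).mpr, M1_biSemiProper⟩
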